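/- arXiv:2112.15489 — 2 statements merged into one kernel-verified Lean document; each statement's English description precedes it below -/
import Mathlib

section
/- For any fixed unicast power P_un ∈ [0,P], the point given by τ* = U+G, q_{jk}^{up*} = Υ_j (1 + η_{jk} P) / ((U+G) η_{jk}²), and q_j^{dl*} = (Γ/(N Υ_j))·(1 + Σ_{t=1}^{K_j} x_{jt}* η_{jt}) with x_{jk}* = Υ_j (1 + η_{jk} P)/η_{jk}², is a feasible point of P1 with Σ_{j=1}^G q_j^{dl*} = P_mu, and its objective value min_{j,k} SE_{jk} equals (1 − (U+G)/T)·log₂(1 + Γ). -/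
/-!
The uplink powers make `τ q_{jk}^{up} η_{jk}² = Υ_j (1 + η_{jk} P)` for every user, which is
within the pilot budget because `Υ_j` is the minimum over the group of `E_{jk} η_{jk}² / (1 + η_{jk} P)`.
Once the downlink powers sum to `P_mu`, the interference term of `SINR_{jk}` is `1 + η_{jk} P`, so
`SINR_{jk} = N q_j^{dl} Υ_j / (1 + S_j)` with `S_j = Σ_t x_{jt}* η_{jt}`, independent of `k`; the choice
`q_j^{dl} ∝ (1 + S_j) / Υ_j` makes it equal to `Γ` in every group. Finally
`(1 + S_j) / Υ_j = 1/Υ_j + Σ_t 1/η_{jt} + K_j P`, and these sum over `j` to the denominator of `Γ`,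
which is exactly why the downlink powers sum to `P_mu`.
-/

open Finset

noncomputable section

/-- Effective estimation quality `ξ_{jk} = τ q_{jk}^{up} η_{jk}² / (1 + Σ_t τ q_{jt}^{up} η_{jt})`. -/
def xiMu {G : ℕ} {K : Fin G → ℕ} (η : ∀ j : Fin G, Fin (K j) → ℝ)
    (τ : ℕ) (qup : ∀ j : Fin G, Fin (K j) → ℝ) (j : Fin G) (k : Fin (K j)) : ℝ :=
  (τ : ℝ) * qup j k * (η j k) ^ 2 / (1 + ∑ t, (τ : ℝ) * qup j t * η j t)

/-- `SINR_{jk} = N q_j^{dl} ξ_{jk} / (1 + η_{jk} (P_un + Σ_i q_i^{dl}))`. -/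
def sinrMu {G : ℕ} {K : Fin G → ℕ} (N : ℕ) (Pun : ℝ)
    (η : ∀ j : Fin G, Fin (K j) → ℝ) (τ : ℕ)
    (qup : ∀ j : Fin G, Fin (K j) → ℝ) (qdl : Fin G → ℝ)
    (j : Fin G) (k : Fin (K j)) : ℝ :=
  (N : ℝ) * qdl j * xiMu η τ qup j k / (1 + η j k * (Pun + ∑ i, qdl i))

/-- `SE_{jk} = (1 - τ/T) log₂(1 + SINR_{jk})`. -/
def seMu {G : ℕ} {K : Fin G → ℕ} (N T : ℕ) (Pun : ℝ)
    (η : ∀ j : Fin G, Fin (K j) → ℝ) (τ : ℕ)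
    (qup : ∀ j : Fin G, Fin (K j) → ℝ) (qdl : Fin G → ℝ)
    (j : Fin G) (k : Fin (K j)) : ℝ :=
  (1 - (τ : ℝ) / (T : ℝ)) * Real.logb 2 (1 + sinrMu N Pun η τ qup qdl j k)

/-- The max–min fairness objective `min_{j,k} SE_{jk}` of problem P1. -/
def objMu {G : ℕ} {K : Fin G → ℕ} (N T : ℕ) (Pun : ℝ)
    (η : ∀ j : Fin G, Fin (K j) → ℝ) (τ : ℕ)
    (qup : ∀ j : Fin G, Fin (K j) → ℝ) (qdl : Fin G → ℝ) : ℝ :=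
  ⨅ j : Fin G, ⨅ k : Fin (K j), seMu N T Pun η τ qup qdl j k

/-- Feasibility for problem P1 with fixed unicast power `Pun`. -/
def feasMu {G : ℕ} {K : Fin G → ℕ} (U T : ℕ) (P Pun : ℝ)
    (E : ∀ j : Fin G, Fin (K j) → ℝ) (τ : ℕ)
    (qup : ∀ j : Fin G, Fin (K j) → ℝ) (qdl : Fin G → ℝ) : Prop :=
  U + G ≤ τ ∧ τ ≤ T ∧
    (∀ j k, 0 ≤ qup j k ∧ (τ : ℝ) * qup j k ≤ E j k) ∧
    (∀ j, 0 ≤ qdl j) ∧ ∑ j, qdl j ≤ P - Pun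

/-- `Υ_j = min_k E_{jk} η_{jk}² / (1 + η_{jk} P)`. -/
def UpsMu {G : ℕ} {K : Fin G → ℕ} (P : ℝ)
    (η E : ∀ j : Fin G, Fin (K j) → ℝ) (j : Fin G) : ℝ :=
  ⨅ k : Fin (K j), E j k * (η j k) ^ 2 / (1 + η j k * P)

/-- `Γ = P_mu N / (P Σ_j K_j + Σ_j 1/Υ_j + Σ_j Σ_t 1/η_{jt})` with `P_mu = P - P_un`. -/
def GamMu {G : ℕ} {K : Fin G → ℕ} (N : ℕ) (P Pun : ℝ)
    (η E : ∀ j : Fin G, Fin (K j) → ℝ) : ℝ :=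
  (P - Pun) * (N : ℝ) /
    (P * ∑ j, (K j : ℝ) + ∑ j, 1 / UpsMu P η E j + ∑ j, ∑ t, 1 / η j t)

/-- `x_{jk}* = Υ_j (1 + η_{jk} P) / η_{jk}²`. -/
def xStarMu {G : ℕ} {K : Fin G → ℕ} (P : ℝ)
    (η E : ∀ j : Fin G, Fin (K j) → ℝ) (j : Fin G) (k : Fin (K j)) : ℝ :=
  UpsMu P η E j * (1 + η j k * P) / (η j k) ^ 2

/-- `q_{jk}^{up*} = Υ_j (1 + η_{jk} P) / ((U+G) η_{jk}²)`. -/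
def qupStarMu (U : ℕ) {G : ℕ} {K : Fin G → ℕ} (P : ℝ)
    (η E : ∀ j : Fin G, Fin (K j) → ℝ) (j : Fin G) (k : Fin (K j)) : ℝ :=
  xStarMu P η E j k / ((U + G : ℕ) : ℝ)

/-- `q_j^{dl*} = (Γ/(N Υ_j)) (1 + Σ_t x_{jt}* η_{jt})`. -/
def qdlStarMu {G : ℕ} {K : Fin G → ℕ} (N : ℕ) (P Pun : ℝ)
    (η E : ∀ j : Fin G, Fin (K j) → ℝ) (j : Fin G) : ℝ :=
  GamMu N P Pun η E / ((N : ℝ) * UpsMu P η E j) * (1 + ∑ t, xStarMu P η E j t * η j t)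

section MmfStarPoint

variable {G : ℕ} {K : Fin G → ℕ}

def gammaDenom (P : ℝ) (η E : ∀ j : Fin G, Fin (K j) → ℝ) : ℝ :=
  P * ∑ j, (K j : ℝ) + ∑ j, 1 / UpsMu P η E j + ∑ j, ∑ t, 1 / η j t

variable {P : ℝ} {η E : ∀ j : Fin G, Fin (K j) → ℝ}

theorem GamMu_eq (N : ℕ) (Pun : ℝ) :
    GamMu N P Pun η E = (P - Pun) * N / gammaDenom P η E := rfl

theorem UpsMu_le (j : Fin G) (k : Fin (K j)) :
    UpsMu P η E j ≤ E j k * η j k ^ 2 / (1 + η j k * P) :=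
  ciInf_le (Finite.bddBelow_range _) k

theorem UpsMu_pos (hP : 0 ≤ P) (j : Fin G) [Nonempty (Fin (K j))]
    (hη : ∀ k, 0 < η j k) (hE : ∀ k, 0 < E j k) : 0 < UpsMu P η E j := by
  obtain ⟨k, hk⟩ := exists_eq_ciInf_of_finite
    (f := fun k : Fin (K j) => E j k * η j k ^ 2 / (1 + η j k * P))
  rw [UpsMu, ← hk]
  have := hE k
  have := hη k
  positivity

theorem gammaDenom_pos [Nonempty (Fin G)] (hP : 0 ≤ P) (hΥ : ∀ j, 0 < UpsMu P η E j)
    (hη : ∀ j k, 0 < η j k) : 0 < gammaDenom P η E := by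
  have hK : 0 ≤ P * ∑ j, (K j : ℝ) := by positivity
  have hinvΥ : 0 < ∑ j, 1 / UpsMu P η E j :=
    sum_pos (fun j _ => one_div_pos.mpr (hΥ j)) univ_nonempty
  have hinvη : 0 ≤ ∑ j, ∑ t, 1 / η j t :=
    sum_nonneg fun j _ => sum_nonneg fun t _ => (one_div_pos.mpr (hη j t)).le
  rw [gammaDenom]
  linarith

theorem xStarMu_nonneg (hP : 0 ≤ P) (hΥ : 0 ≤ UpsMu P η E j) (hη : 0 < η j k) :
    0 ≤ xStarMu P η E j k := by
  rw [xStarMu]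
  positivity

theorem one_add_sum_xStarMu_mul_pos (hP : 0 ≤ P) (j : Fin G) (hΥ : 0 ≤ UpsMu P η E j)
    (hη : ∀ t, 0 < η j t) : 0 < 1 + ∑ t, xStarMu P η E j t * η j t := by
  have := sum_nonneg fun t (_ : t ∈ univ) => mul_nonneg (xStarMu_nonneg hP hΥ (hη t)) (hη t).le
  linarith

theorem xStarMu_mul_sq (hη : η j k ≠ 0) :
    xStarMu P η E j k * η j k ^ 2 = UpsMu P η E j * (1 + η j k * P) :=
  div_mul_cancel₀ _ (pow_ne_zero 2 hη)

theorem xStarMu_le (hP : 0 ≤ P) (hη : 0 < η j k) : xStarMu P η E j k ≤ E j k := by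
  have hden : 0 < 1 + η j k * P := by positivity
  rw [← mul_le_mul_iff_left₀ (pow_pos hη 2), xStarMu_mul_sq hη.ne',
    ← le_div_iff₀ hden]
  exact UpsMu_le j k

theorem sum_xStarMu_mul (j : Fin G) (hη : ∀ t, η j t ≠ 0) :
    ∑ t, xStarMu P η E j t * η j t = UpsMu P η E j * (∑ t, 1 / η j t + K j * P) := by
  have hterm : ∀ t, xStarMu P η E j t * η j t
      = UpsMu P η E j * (1 / η j t) + UpsMu P η E j * P := by
    intro t
    have := hη t
    rw [xStarMu]
    field_simp
  simp only [hterm, sum_add_distrib, ← mul_sum, sum_const, card_univ, Fintype.card_fin,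
    nsmul_eq_mul]
  ring

theorem qdlStarMu_eq {N : ℕ} (hN : N ≠ 0) (Pun : ℝ) (j : Fin G) (hΥ : UpsMu P η E j ≠ 0)
    (hη : ∀ t, η j t ≠ 0) :
    qdlStarMu N P Pun η E j
      = GamMu N P Pun η E / N * (1 / UpsMu P η E j + ∑ t, 1 / η j t + K j * P) := by
  rw [qdlStarMu, sum_xStarMu_mul j hη]
  field_simp
  ring

theorem sum_qdlStarMu {N : ℕ} (hN : N ≠ 0) (Pun : ℝ) (hΥ : ∀ j, UpsMu P η E j ≠ 0)
    (hη : ∀ j k, η j k ≠ 0) (hD : gammaDenom P η E ≠ 0) :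
    ∑ j, qdlStarMu N P Pun η E j = P - Pun := by
  have hN' : (N : ℝ) ≠ 0 := Nat.cast_ne_zero.mpr hN
  have hsum : ∑ j, (1 / UpsMu P η E j + ∑ t, 1 / η j t + K j * P) = gammaDenom P η E := by
    rw [sum_add_distrib, sum_add_distrib, ← sum_mul, gammaDenom]
    ring
  rw [sum_congr rfl fun j _ => qdlStarMu_eq hN Pun j (hΥ j) (hη j), ← mul_sum, hsum,
    GamMu_eq]
  field_simp

theorem GamMu_nonneg (N : ℕ) {Pun : ℝ} (hPunP : Pun ≤ P) (hD : 0 < gammaDenom P η E) :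
    0 ≤ GamMu N P Pun η E := by
  have : 0 ≤ P - Pun := sub_nonneg.mpr hPunP
  rw [GamMu_eq]
  positivity

theorem cast_mul_qupStarMu (U : ℕ) (hUG : U + G ≠ 0) (j : Fin G) (k : Fin (K j)) :
    ((U + G : ℕ) : ℝ) * qupStarMu U P η E j k = xStarMu P η E j k := by
  have : ((U + G : ℕ) : ℝ) ≠ 0 := Nat.cast_ne_zero.mpr hUG
  rw [qupStarMu]
  field_simp

theorem sinrMu_star_eq_GamMu (U N : ℕ) (hUG : U + G ≠ 0) (hN : N ≠ 0) (hP : 0 ≤ P) (Pun : ℝ)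
    (hΥ : ∀ j, 0 < UpsMu P η E j) (hη : ∀ j k, 0 < η j k)
    (hsum : ∑ j, qdlStarMu N P Pun η E j = P - Pun) (j : Fin G) (k : Fin (K j)) :
    sinrMu N Pun η (U + G) (qupStarMu U P η E) (qdlStarMu N P Pun η E) j k
      = GamMu N P Pun η E := by
  have hτq := cast_mul_qupStarMu (P := P) (η := η) (E := E) U hUG
  have hN' : (N : ℝ) ≠ 0 := Nat.cast_ne_zero.mpr hN
  have hS := one_add_sum_xStarMu_mul_pos hP j (hΥ j).le (hη j)
  have hden : 0 < 1 + η j k * P := by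
    have := hη j k
    positivity
  have := (hΥ j).ne'
  rw [sinrMu, hsum, add_sub_cancel, xiMu]
  simp only [hτq, xStarMu_mul_sq (hη j k).ne', qdlStarMu]
  field_simp

end MmfStarPoint

theorem mmf_optimal_point_feasible_and_attains_general
    (U G : ℕ) (hG : 1 ≤ G) (K : Fin G → ℕ) (hK : ∀ j, 1 ≤ K j)
    (N : ℕ) (hN : 1 ≤ N) (T : ℕ) (hT : U + G ≤ T)
    (P : ℝ) (hP : 0 < P)
    (η E : ∀ j : Fin G, Fin (K j) → ℝ)
    (hη : ∀ j k, 0 < η j k) (hE : ∀ j k, 0 < E j k)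
    (Pun : ℝ) (hPunP : Pun ≤ P) :
    feasMu U T P Pun E (U + G) (qupStarMu U P η E) (qdlStarMu N P Pun η E) ∧
    (∑ j, qdlStarMu N P Pun η E j = P - Pun) ∧
    objMu N T Pun η (U + G) (qupStarMu U P η E) (qdlStarMu N P Pun η E)
      = (1 - ((U + G : ℕ) : ℝ) / (T : ℝ)) * Real.logb 2 (1 + GamMu N P Pun η E) := by
  have : Nonempty (Fin G) := ⟨⟨0, hG⟩⟩
  have (j : Fin G) : Nonempty (Fin (K j)) := ⟨⟨0, hK j⟩⟩
  have hUG : U + G ≠ 0 := by omega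
  have hN0 : N ≠ 0 := by omega
  have hΥ j : 0 < UpsMu P η E j := UpsMu_pos hP.le j (hη j) (hE j)
  have hsum : ∑ j, qdlStarMu N P Pun η E j = P - Pun :=
    sum_qdlStarMu hN0 Pun (fun j => (hΥ j).ne') (fun j k => (hη j k).ne')
      (gammaDenom_pos hP.le hΥ hη).ne'
  refine ⟨⟨le_rfl, hT, fun j k => ⟨?_, ?_⟩, fun j => ?_, hsum.le⟩, hsum, ?_⟩
  · exact div_nonneg (xStarMu_nonneg hP.le (hΥ j).le (hη j k)) (Nat.cast_nonneg _)
  · exact (cast_mul_qupStarMu U hUG j k).trans_le (xStarMu_le hP.le (hη j k))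
  · have := hΥ j
    have := GamMu_nonneg N hPunP (gammaDenom_pos hP.le hΥ hη)
    exact mul_nonneg (by positivity) (one_add_sum_xStarMu_mul_pos hP.le j (hΥ j).le (hη j)).le
  · simp only [objMu, seMu, sinrMu_star_eq_GamMu U N hUG hN0 hP.le Pun hΥ hη hsum, ciInf_const]

/-- for any fixed unicast power `P_un ∈ [0,P]`, the point
`τ* = U+G`, `q_{jk}^{up*} = Υ_j (1+η_{jk}P)/((U+G) η_{jk}²)`,
`q_j^{dl*} = (Γ/(N Υ_j))(1 + Σ_t x_{jt}* η_{jt})` is feasible for P1, uses the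
full multicast power `P_mu = P - P_un`, and attains the objective value
`(1 - (U+G)/T) log₂(1 + Γ)`. -/
theorem mmf_optimal_point_feasible_and_attains
    (U G : ℕ) (hG : 1 ≤ G) (K : Fin G → ℕ) (hK : ∀ j, 1 ≤ K j)
    (N : ℕ) (hN : 1 ≤ N) (T : ℕ) (hT : U + G ≤ T)
    (P : ℝ) (hP : 0 < P)
    (η E : ∀ j : Fin G, Fin (K j) → ℝ)
    (hη : ∀ j k, 0 < η j k) (hE : ∀ j k, 0 < E j k)
    (Pun : ℝ) (hPun0 : 0 ≤ Pun) (hPunP : Pun ≤ P) :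
    feasMu U T P Pun E (U + G) (qupStarMu U P η E) (qdlStarMu N P Pun η E) ∧
    (∑ j, qdlStarMu N P Pun η E j = P - Pun) ∧
    objMu N T Pun η (U + G) (qupStarMu U P η E) (qdlStarMu N P Pun η E)
      = (1 - ((U + G : ℕ) : ℝ) / (T : ℝ)) * Real.logb 2 (1 + GamMu N P Pun η E) :=
  mmf_optimal_point_feasible_and_attains_general U G hG K hK N hN T hT P hP η E hη hE Pun hPunP
end
end

section
/- Shortening the pilots of P1 to their minimum length while preserving the pilot energies never decreases the objective: if (τ, {q_{jk}^{up}}, {q_j^{dl}}) is a feasible point of P1, then (U+G, {τ q_{jk}^{up}/(U+G)}, {q_j^{dl}}) is also feasible, and its objective value min_{j,k} SE_{jk} is greater than or equal to that of the original point. -/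
open Finset

noncomputable section

/-!
The pilot energies `τ q_{jk}^{up}` are all that the estimation quality `ξ_{jk}` sees, so
shortening the pilots to the minimum length `U + G` at fixed energy leaves every SINR and every
energy constraint unchanged, while the pre-log factor `1 - τ/T` can only grow; since
`log₂ (1 + SINR) ≥ 0`, every `SE_{jk}` grows with it.
-/

def rescalePilots {G : ℕ} {K : Fin G → ℕ} (τ τ' : ℕ) (qup : ∀ j : Fin G, Fin (K j) → ℝ) :
    ∀ j : Fin G, Fin (K j) → ℝ :=
  fun j k => (τ : ℝ) * qup j k / (τ' : ℝ)

section

variable {G : ℕ} {K : Fin G → ℕ} (η : ∀ j : Fin G, Fin (K j) → ℝ)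

theorem cast_mul_rescalePilots {τ' : ℕ} (hτ' : τ' ≠ 0) (τ : ℕ) (qup : ∀ j : Fin G, Fin (K j) → ℝ)
    (j : Fin G) (k : Fin (K j)) : (τ' : ℝ) * rescalePilots τ τ' qup j k = τ * qup j k :=
  mul_div_cancel₀ _ (Nat.cast_ne_zero.mpr hτ')

theorem xiMu_congr_energy {τ τ' : ℕ} {qup qup' : ∀ j : Fin G, Fin (K j) → ℝ} {j : Fin G}
    (h : ∀ t, (τ' : ℝ) * qup' j t = τ * qup j t) (k : Fin (K j)) :
    xiMu η τ' qup' j k = xiMu η τ qup j k := by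
  simp only [xiMu, h]

theorem sinrMu_congr_energy (N : ℕ) (Pun : ℝ) {τ τ' : ℕ} {qup qup' : ∀ j : Fin G, Fin (K j) → ℝ}
    (qdl : Fin G → ℝ) {j : Fin G} (h : ∀ t, (τ' : ℝ) * qup' j t = τ * qup j t) (k : Fin (K j)) :
    sinrMu N Pun η τ' qup' qdl j k = sinrMu N Pun η τ qup qdl j k := by
  rw [sinrMu, sinrMu, xiMu_congr_energy η h]

theorem xiMu_nonneg (hη : ∀ j k, 0 ≤ η j k) {qup : ∀ j : Fin G, Fin (K j) → ℝ}
    (hqup : ∀ j k, 0 ≤ qup j k) (τ : ℕ) (j : Fin G) (k : Fin (K j)) :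
    0 ≤ xiMu η τ qup j k := by
  have hsum : 0 ≤ ∑ t, (τ : ℝ) * qup j t * η j t :=
    sum_nonneg fun t _ => mul_nonneg (mul_nonneg τ.cast_nonneg (hqup j t)) (hη j t)
  unfold xiMu
  have := hqup j k
  positivity

theorem sinrMu_nonneg (hη : ∀ j k, 0 ≤ η j k) (N : ℕ) {Pun : ℝ} (hPun : 0 ≤ Pun) (τ : ℕ)
    {qup : ∀ j : Fin G, Fin (K j) → ℝ} {qdl : Fin G → ℝ}
    (hqup : ∀ j k, 0 ≤ qup j k) (hqdl : ∀ j, 0 ≤ qdl j) (j : Fin G) (k : Fin (K j)) :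
    0 ≤ sinrMu N Pun η τ qup qdl j k := by
  have hinterf : 0 ≤ Pun + ∑ i, qdl i := add_nonneg hPun (sum_nonneg fun i _ => hqdl i)
  have hξ := xiMu_nonneg η hη hqup τ j k
  have := hη j k
  have := hqdl j
  unfold sinrMu
  positivity

theorem seMu_le_of_sinrMu_eq (N T : ℕ) (Pun : ℝ) {τ τ' : ℕ} (hτ : τ' ≤ τ)
    {qup qup' : ∀ j : Fin G, Fin (K j) → ℝ} (qdl : Fin G → ℝ) {j : Fin G} {k : Fin (K j)}
    (hsinr : sinrMu N Pun η τ' qup' qdl j k = sinrMu N Pun η τ qup qdl j k)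
    (hnonneg : 0 ≤ sinrMu N Pun η τ qup qdl j k) :
    seMu N T Pun η τ qup qdl j k ≤ seMu N T Pun η τ' qup' qdl j k := by
  have hlog : 0 ≤ Real.logb 2 (1 + sinrMu N Pun η τ qup qdl j k) :=
    Real.logb_nonneg one_lt_two (by linarith)
  rw [seMu, seMu, hsinr]
  gcongr

end

theorem objMu_mono {G : ℕ} {K : Fin G → ℕ} {N N' T T' : ℕ} {Pun Pun' : ℝ}
    {η η' : ∀ j : Fin G, Fin (K j) → ℝ} {τ τ' : ℕ} {qup qup' : ∀ j : Fin G, Fin (K j) → ℝ}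
    {qdl qdl' : Fin G → ℝ}
    (h : ∀ j k, seMu N T Pun η τ qup qdl j k ≤ seMu N' T' Pun' η' τ' qup' qdl' j k) :
    objMu N T Pun η τ qup qdl ≤ objMu N' T' Pun' η' τ' qup' qdl' :=
  ciInf_mono (Set.finite_range _).bddBelow fun j =>
    ciInf_mono (Set.finite_range _).bddBelow (h j)

theorem feasMu_rescalePilots {U T : ℕ} {P Pun : ℝ} {G : ℕ} {K : Fin G → ℕ}
    {E : ∀ j : Fin G, Fin (K j) → ℝ} {τ τ' : ℕ} {qup : ∀ j : Fin G, Fin (K j) → ℝ}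
    {qdl : Fin G → ℝ} (hτ'min : U + G ≤ τ') (hτ' : τ' ≤ τ)
    (hfeas : feasMu U T P Pun E τ qup qdl) :
    feasMu U T P Pun E τ' (rescalePilots τ τ' qup) qdl := by
  obtain ⟨-, hτT, hqup, hqdl, hsum⟩ := hfeas
  refine ⟨hτ'min, hτ'.trans hτT, fun j k => ⟨?_, ?_⟩, hqdl, hsum⟩
  · exact div_nonneg (mul_nonneg τ.cast_nonneg (hqup j k).1) τ'.cast_nonneg
  · rw [cast_mul_rescalePilots (by have := j.pos; omega)]
    exact (hqup j k).2

theorem objMu_le_objMu_rescalePilots {G : ℕ} {K : Fin G → ℕ} (N T : ℕ) {Pun : ℝ}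
    (hPun : 0 ≤ Pun) {η : ∀ j : Fin G, Fin (K j) → ℝ} (hη : ∀ j k, 0 ≤ η j k)
    {τ τ' : ℕ} (hτ'0 : τ' ≠ 0) (hτ' : τ' ≤ τ) {qup : ∀ j : Fin G, Fin (K j) → ℝ}
    {qdl : Fin G → ℝ} (hqup : ∀ j k, 0 ≤ qup j k) (hqdl : ∀ j, 0 ≤ qdl j) :
    objMu N T Pun η τ qup qdl ≤ objMu N T Pun η τ' (rescalePilots τ τ' qup) qdl :=
  objMu_mono fun j k =>
    seMu_le_of_sinrMu_eq η N T Pun hτ' qdl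
      (sinrMu_congr_energy η N Pun qdl (cast_mul_rescalePilots hτ'0 τ qup j) k)
      (sinrMu_nonneg η hη N hPun τ hqup hqdl j k)

theorem mmf_shorter_pilots_better_general
    (U G : ℕ) (hG : 1 ≤ G) (K : Fin G → ℕ)
    (N : ℕ) (T : ℕ)
    (P : ℝ)
    (η E : ∀ j : Fin G, Fin (K j) → ℝ)
    (hη : ∀ j k, 0 < η j k)
    (Pun : ℝ) (hPun0 : 0 ≤ Pun)
    (τ : ℕ) (qup : ∀ j : Fin G, Fin (K j) → ℝ) (qdl : Fin G → ℝ)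
    (hfeas : feasMu U T P Pun E τ qup qdl) :
    feasMu U T P Pun E (U + G)
        (fun j k => (τ : ℝ) * qup j k / ((U + G : ℕ) : ℝ)) qdl ∧
    objMu N T Pun η τ qup qdl ≤
      objMu N T Pun η (U + G)
        (fun j k => (τ : ℝ) * qup j k / ((U + G : ℕ) : ℝ)) qdl := by
  refine ⟨feasMu_rescalePilots le_rfl hfeas.1 hfeas, ?_⟩
  obtain ⟨hmin, -, hup, hdl, -⟩ := hfeas
  exact objMu_le_objMu_rescalePilots N T hPun0 (fun j k => (hη j k).le) (by omega) hmin
    (fun j k => (hup j k).1) hdl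

/-- shortening the pilots of P1 to their minimum length `U+G` while
preserving the pilot energies (`q'_{jk} = τ q_{jk}^{up}/(U+G)`) keeps feasibility and
never decreases the max–min objective. -/
theorem mmf_shorter_pilots_better
    (U G : ℕ) (hG : 1 ≤ G) (K : Fin G → ℕ) (hK : ∀ j, 1 ≤ K j)
    (N : ℕ) (hN : 1 ≤ N) (T : ℕ) (hT : U + G ≤ T)
    (P : ℝ) (hP : 0 < P)
    (η E : ∀ j : Fin G, Fin (K j) → ℝ)
    (hη : ∀ j k, 0 < η j k) (hE : ∀ j k, 0 < E j k)
    (Pun : ℝ) (hPun0 : 0 ≤ Pun) (hPunP : Pun ≤ P)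
    (τ : ℕ) (qup : ∀ j : Fin G, Fin (K j) → ℝ) (qdl : Fin G → ℝ)
    (hfeas : feasMu U T P Pun E τ qup qdl) :
    feasMu U T P Pun E (U + G)
        (fun j k => (τ : ℝ) * qup j k / ((U + G : ℕ) : ℝ)) qdl ∧
    objMu N T Pun η τ qup qdl ≤
      objMu N T Pun η (U + G)
        (fun j k => (τ : ℝ) * qup j k / ((U + G : ℕ) : ℝ)) qdl :=
  mmf_shorter_pilots_better_general U G hG K N T P η E hη Pun hPun0 τ qup qdl hfeas
end
end
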